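/- Let n ≥ 3 and let Γ ⊂ R^n be the graph of h ∈ C^2_c(R^{n-1}) with supp h ⊆ closure of B_{R_h}(0'). Then L^{(2n-2)/n}(Γ) is continuously embedded in Ḣ^{-1/2}(Γ): for every g^h ∈ L^{(2n-2)/n}(Γ), ‖g^h‖_{Ḣ^{-1/2}(Γ)} ≤ C(n) C_s(h)^{n/2+1} C_1(h) ‖g^h‖_{L^{(2n-2)/n}(Γ)}, where C_s(h) = 1 + ‖h‖_{C^1(R^{n-1})} and C_1(h) = 1 + R_h ‖∇'^2 h‖_{L^∞(R^{n-1})}. -/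

import Mathlib

noncomputable section

open MeasureTheory Metric Set Filter
open scoped ENNReal NNReal RealInnerProductSpace

namespace GG

abbrev En (n : ℕ) := EuclideanSpace ℝ (Fin n)
abbrev En' (n : ℕ) := EuclideanSpace ℝ (Fin (n - 1))

/-- First `n-1` coordinates of a point of `ℝⁿ`. -/
def proj (n : ℕ) (x : En n) : En' n :=
  WithLp.toLp 2 (fun j => x ⟨(j : ℕ), lt_of_lt_of_le j.2 (Nat.sub_le n 1)⟩)

/-- Last coordinate of a point of `ℝⁿ`. -/
def lastC (n : ℕ) (x : En n) : ℝ :=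
  if hn : 0 < n then x ⟨n - 1, Nat.sub_lt hn one_pos⟩ else 0

/-- The point of `ℝⁿ` with horizontal part `y` and last coordinate `t`. -/
def emb (n : ℕ) (y : En' n) (t : ℝ) : En n :=
  WithLp.toLp 2 (fun i => if hi : (i : ℕ) < n - 1 then y ⟨(i : ℕ), hi⟩ else t)

/-- The perturbed half space `{x : xₙ > h(x')}`. -/
def dom (n : ℕ) (h : En' n → ℝ) : Set (En n) := {x | h (proj n x) < lastC n x}

/-- The boundary graph `Γ = {x : xₙ = h(x')}`. -/
def bdry (n : ℕ) (h : En' n → ℝ) : Set (En n) := {x | lastC n x = h (proj n x)}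

open Classical in
/-- Signed distance to `Γ`, positive inside the domain. -/
def sdist (n : ℕ) (h : En' n → ℝ) (x : En n) : ℝ :=
  if x ∈ dom n h then infDist x (bdry n h) else -(infDist x (bdry n h))

/-- `ρ`-unique-projection property of a set. -/
def UniqueProj (n : ℕ) (Γ : Set (En n)) (ρ : ℝ) : Prop :=
  ∀ x : En n, infDist x Γ < ρ → ∃! y, y ∈ Γ ∧ dist x y = infDist x Γ

/-- The reach of `Γ`. -/
def reach (n : ℕ) (Γ : Set (En n)) : ℝ :=
  sSup {ρ : ℝ | 0 < ρ ∧ UniqueProj n Γ ρ}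

/-- BMO seminorm over `Ω`, over balls of radius `< μ`. -/
def bmoSemi (n : ℕ) (Ω : Set (En n)) (μ : ℝ≥0∞) (v : En n → En n) : ℝ≥0∞ :=
  ⨆ (x : En n) (r : ℝ) (_ : 0 < r) (_ : ENNReal.ofReal r < μ) (_ : ball x r ⊆ Ω),
    (volume (ball x r))⁻¹ *
      ∫⁻ y in ball x r, (‖v y - ⨍ z in ball x r, v z ∂volume‖₊ : ℝ≥0∞)

/-- Boundary seminorm `b^ν`. -/
def bSemi (n : ℕ) (Ω Γ : Set (En n)) (ν : ℝ≥0∞) (f : En n → ℝ) : ℝ≥0∞ :=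
  ⨆ (x : En n) (_ : x ∈ Γ) (r : ℝ) (_ : 0 < r) (_ : ENNReal.ofReal r < ν),
    (ENNReal.ofReal (r ^ n))⁻¹ * ∫⁻ y in Ω ∩ ball x r, (‖f y‖₊ : ℝ≥0∞)

/-- Normal component `∇d_Γ · v`. -/
def nc (n : ℕ) (Γ : Set (En n)) (v : En n → En n) (x : En n) : ℝ :=
  fderiv ℝ (fun z => infDist z Γ) x (v x)

/-- The `vBMOL²` norm. -/
def vbmoL2Norm (n : ℕ) (Ω Γ : Set (En n)) (v : En n → En n) : ℝ≥0∞ :=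
  bmoSemi n Ω ⊤ v + bSemi n Ω Γ ⊤ (nc n Γ v) + eLpNorm v 2 (volume.restrict Ω)

/-- Membership in `vBMOL²(Ω)`. -/
def MemvBMOL2 (n : ℕ) (Ω Γ : Set (En n)) (v : En n → En n) : Prop :=
  MemLp v 2 (volume.restrict Ω) ∧ bmoSemi n Ω ⊤ v < ⊤ ∧ bSemi n Ω Γ ⊤ (nc n Γ v) < ⊤

/-- Distributionally divergence free in `Ω`. -/
def DivFreeIn (n : ℕ) (Ω : Set (En n)) (v : En n → En n) : Prop :=
  ∀ φ : En n → ℝ, ContDiff ℝ (⊤ : ℕ∞) φ → HasCompactSupport φ → tsupport φ ⊆ Ω →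
    ∫ x in Ω, ⟪v x, gradient φ x⟫ = 0

/-- Divergence free in `Ω` together with vanishing normal trace on `∂Ω`. -/
def DivFreeZeroTrace (n : ℕ) (Ω : Set (En n)) (v : En n → En n) : Prop :=
  ∀ φ : En n → ℝ, ContDiff ℝ (⊤ : ℕ∞) φ → HasCompactSupport φ →
    ∫ x in Ω, ⟪v x, gradient φ x⟫ = 0

/-- `w` is the (pointwise) gradient of `q` on `Ω`. -/
def IsGradientOn (n : ℕ) (Ω : Set (En n)) (q : En n → ℝ) (w : En n → En n) : Prop :=
  ∀ x ∈ Ω, HasGradientAt q (w x) x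

/-- `w` is the weak (distributional) gradient of `q` on `Ω`. -/
def WeakGradOn (n : ℕ) (Ω : Set (En n)) (q : En n → ℝ) (w : En n → En n) : Prop :=
  ∀ φ : En n → ℝ, ContDiff ℝ (⊤ : ℕ∞) φ → HasCompactSupport φ → tsupport φ ⊆ Ω →
    ∫ x in Ω, q x • gradient φ x = -∫ x in Ω, φ x • w x

/-- `q ∈ L²_loc(Ω)`. -/
def L2loc (n : ℕ) (Ω : Set (En n)) (q : En n → ℝ) : Prop :=
  ∀ Kc : Set (En n), IsCompact Kc → Kc ⊆ Ω → MemLp q 2 (volume.restrict Kc)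

/-- Laplacian. -/
def lap (n : ℕ) (φ : En n → ℝ) (x : En n) : ℝ :=
  ∑ i : Fin n,
    iteratedFDeriv ℝ 2 φ x ![EuclideanSpace.single i 1, EuclideanSpace.single i 1]

/-- Squared Gagliardo seminorm of order 1/2 on `ℝ^{n-1}` (kernel `|x-y|^{-n}`). -/
def gagSqE' (n : ℕ) (f : En' n → ℝ) : ℝ≥0∞ :=
  ∫⁻ x, ∫⁻ y, ENNReal.ofReal (|f x - f y| ^ 2 / ‖x - y‖ ^ n)

/-- The `Ḣ^{1/2}(ℝ^{n-1})` (Gagliardo) norm. -/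
def hHalfNormE' (n : ℕ) (f : En' n → ℝ) : ℝ≥0∞ := gagSqE' n f ^ (1 / 2 : ℝ)

/-- Membership in `Ḣ^{1/2}(ℝ^{n-1})`. -/
def MemHhalfE' (n : ℕ) (f : En' n → ℝ) : Prop :=
  MemLp f (ENNReal.ofReal ((2 * (n : ℝ) - 2) / ((n : ℝ) - 2))) volume ∧ gagSqE' n f < ⊤

/-- Surface measure on a hypersurface: `(n-1)`-dimensional Hausdorff measure. -/
def surf (n : ℕ) : Measure (En n) := μH[((n : ℝ) - 1)]

/-- Squared Gagliardo seminorm of order 1/2 on a hypersurface `Γ ⊆ ℝⁿ`. -/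
def gagSqS (n : ℕ) (Γ : Set (En n)) (f : En n → ℝ) : ℝ≥0∞ :=
  ∫⁻ x in Γ, ∫⁻ y in Γ, ENNReal.ofReal (|f x - f y| ^ 2 / ‖x - y‖ ^ n) ∂surf n ∂surf n

/-- The `Ḣ^{1/2}(Γ)` norm. -/
def hHalfNormS (n : ℕ) (Γ : Set (En n)) (f : En n → ℝ) : ℝ≥0∞ :=
  gagSqS n Γ f ^ (1 / 2 : ℝ)

/-- Membership in `Ḣ^{1/2}(Γ)`. -/
def MemHhalfS (n : ℕ) (Γ : Set (En n)) (f : En n → ℝ) : Prop :=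
  MemLp f (ENNReal.ofReal ((2 * (n : ℝ) - 2) / ((n : ℝ) - 2))) ((surf n).restrict Γ) ∧
    gagSqS n Γ f < ⊤

/-- The dual `Ḣ^{-1/2}(ℝ^{n-1})` norm. -/
def hmHalfNormE' (n : ℕ) (g : En' n → ℝ) : ℝ≥0∞ :=
  ⨆ (f : En' n → ℝ) (_ : MemHhalfE' n f) (_ : hHalfNormE' n f ≤ 1)
    (_ : Integrable (fun y => g y * f y) volume),
    ENNReal.ofReal |∫ y, g y * f y|

/-- The dual `Ḣ^{-1/2}(Γ)` norm. -/
def hmHalfNormS (n : ℕ) (Γ : Set (En n)) (g : En n → ℝ) : ℝ≥0∞ :=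
  ⨆ (f : En n → ℝ) (_ : MemHhalfS n Γ f) (_ : hHalfNormS n Γ f ≤ 1)
    (_ : Integrable (fun y => g y * f y) ((surf n).restrict Γ)),
    ENNReal.ofReal |∫ y in Γ, g y * f y ∂surf n|

/-- The `L^∞(Γ) ∩ Ḣ^{-1/2}(Γ)` norm. -/
def LinfHmHalfNormS (n : ℕ) (Γ : Set (En n)) (g : En n → ℝ) : ℝ≥0∞ :=
  eLpNorm g ⊤ ((surf n).restrict Γ) + hmHalfNormS n Γ g

/-- Membership in `L^∞(Γ) ∩ Ḣ^{-1/2}(Γ)`. -/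
def MemLinfHmHalfS (n : ℕ) (Γ : Set (En n)) (g : En n → ℝ) : Prop :=
  MemLp g ⊤ ((surf n).restrict Γ) ∧ hmHalfNormS n Γ g < ⊤

/-- Fundamental solution of `-Δ` in `ℝⁿ`. -/
def fundSol (n : ℕ) (x : En n) : ℝ :=
  if n = 2 then -Real.log ‖x‖ / (2 * Real.pi)
  else ‖x‖ ^ ((2 : ℝ) - n) / ((n : ℝ) * ((n : ℝ) - 2) * (volume (ball (0 : En n) 1)).toReal)

/-- Outward unit normal of the graph `Γ` at the point over `y'`. -/
def outNormal (n : ℕ) (h : En' n → ℝ) (y' : En' n) : En n :=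
  (Real.sqrt (1 + ‖gradient h y'‖ ^ 2))⁻¹ • emb n (gradient h y') (-1)

/-- `∂E/∂n_y (x - y)`: normal derivative in `y` of `E(x - ·)`. -/
def dEdny (n : ℕ) (h : En' n → ℝ) (x y : En n) : ℝ :=
  fderiv ℝ (fun z => fundSol n (x - z)) y (outNormal n h (proj n y))

/-- `∂E/∂n_x (x - y)`: exterior normal derivative in `x`, `n_x = -∇d(x)`. -/
def dEdnx (n : ℕ) (h : En' n → ℝ) (x y : En n) : ℝ :=
  fderiv ℝ (fun z => fundSol n (z - y)) x (-(gradient (sdist n h) x))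

/-- The double layer potential `Qg`. -/
def Qop (n : ℕ) (h : En' n → ℝ) (g : En n → ℝ) (x : En n) : ℝ :=
  ∫ y in bdry n h, dEdnx n h x y * g y ∂surf n

/-- The boundary trace operator `S`. -/
def Sop (n : ℕ) (h : En' n → ℝ) (g : En n → ℝ) (x₀ : En n) : ℝ :=
  -∫ y in bdry n h, dEdnx n h x₀ y * g y ∂surf n

/-- Single layer potential `E * (δ_Γ ⊗ g)`. -/
def SLP (n : ℕ) (h : En' n → ℝ) (g : En n → ℝ) (x : En n) : ℝ :=
  ∫ y in bdry n h, fundSol n (x - y) * g y ∂surf n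

/-- Single layer potential on the hyperplane `∂ℝⁿ₊`. -/
def SLPhalf (n : ℕ) (g : En' n → ℝ) (x : En n) : ℝ :=
  ∫ y', fundSol n (x - emb n y' 0) * g y'

/-- `sup |h|`. -/
def supAbs (n : ℕ) (h : En' n → ℝ) : ℝ := ⨆ y, |h y|

/-- `sup ‖∇'h‖`. -/
def supGrad (n : ℕ) (h : En' n → ℝ) : ℝ := ⨆ y, ‖fderiv ℝ h y‖

/-- `sup ‖∇'²h‖`. -/
def supHess (n : ℕ) (h : En' n → ℝ) : ℝ := ⨆ y, ‖fderiv ℝ (fderiv ℝ h) y‖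

/-- `‖h‖_{C¹}`. -/
def normC1 (n : ℕ) (h : En' n → ℝ) : ℝ := supAbs n h + supGrad n h

/-- `C_s(h) = 1 + ‖h‖_{C¹}`. -/
def Cs (n : ℕ) (h : En' n → ℝ) : ℝ := 1 + normC1 n h

/-- `C_1(h) = 1 + R_h ‖∇'²h‖_∞`. -/
def C1c (n : ℕ) (h : En' n → ℝ) (Rh : ℝ) : ℝ := 1 + Rh * supHess n h

/-- `C_{*,1}(h)`. -/
def Cst1 (n : ℕ) (h : En' n → ℝ) (Rh : ℝ) : ℝ :=
  C1c n h Rh ^ 3 * (1 + Rh ^ ((1 : ℝ) / 4)) *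
    (Rh ^ ((1 : ℝ) / 2) * supHess n h + Rh ^ ((5 : ℝ) / 2) * supHess n h ^ 3)

/-- `C_{*,2}(h)`. -/
def Cst2 (n : ℕ) (h : En' n → ℝ) (Rh : ℝ) : ℝ :=
  (Rh + Rh ^ (1 / (2 * (n : ℝ)))) * supHess n h + (Rh ^ ((n : ℝ) - 1) + 1) * normC1 n h

/-- `R_h` is the smallest radius with `supp h ⊆ closedBall 0 R`. -/
def IsSuppRadius (n : ℕ) (h : En' n → ℝ) (Rh : ℝ) : Prop :=
  IsLeast {R : ℝ | 0 ≤ R ∧ tsupport h ⊆ closedBall 0 R} Rh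

/-! ### Auxiliary lemmas for Statement 7 -/

section Aux

variable {n : ℕ}

/-- Inclusion `Fin (n-1) → Fin n`. -/
def castF (n : ℕ) (j : Fin (n - 1)) : Fin n :=
  ⟨(j : ℕ), lt_of_lt_of_le j.2 (Nat.sub_le n 1)⟩

lemma castF_injective (n : ℕ) : Function.Injective (castF n) := by
  intro a b hab
  have h2 : ((castF n a : Fin n) : ℕ) = ((castF n b : Fin n) : ℕ) := congrArg Fin.val hab
  exact Fin.val_injective h2

lemma proj_apply' (x : En n) (j : Fin (n - 1)) : proj n x j = x (castF n j) := rfl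

lemma sum_split (F : Fin n → ℝ)
    (h0 : ∀ i : Fin n, ¬((i : ℕ) < n - 1) → F i = 0) :
    ∑ i, F i = ∑ j : Fin (n - 1), F (castF n j) := by
  have himg : ∑ i ∈ Finset.univ.image (castF n), F i = ∑ j, F (castF n j) :=
    Finset.sum_image (fun a _ b _ hab => castF_injective n hab)
  rw [← himg]
  refine (Finset.sum_subset (Finset.subset_univ _) ?_).symm
  intro i _ hi
  refine h0 i fun hlt => hi ?_
  exact Finset.mem_image.2 ⟨⟨(i : ℕ), hlt⟩, Finset.mem_univ _, rfl⟩

lemma emb_apply_lt (y : En' n) (t : ℝ) (j : Fin (n - 1)) :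
    emb n y t (castF n j) = y j := by
  have hj : ((castF n j : Fin n) : ℕ) < n - 1 := j.2
  simp only [emb, dif_pos hj]
  exact congrArg y (Fin.ext rfl)

lemma emb_apply_last (hn : 0 < n) (y : En' n) (t : ℝ) :
    emb n y t ⟨n - 1, Nat.sub_lt hn one_pos⟩ = t := by
  simp [emb]

lemma norm_emb_horiz (y : En' n) : ‖emb n y (0 : ℝ)‖ = ‖y‖ := by
  rw [EuclideanSpace.norm_eq, EuclideanSpace.norm_eq]
  congr 1
  rw [sum_split (fun i => ‖emb n y 0 i‖ ^ 2) (fun i hi => by simp [emb, dif_neg hi])]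
  exact Finset.sum_congr rfl fun j _ => by rw [emb_apply_lt]

lemma norm_emb_vert (hn : 0 < n) (t : ℝ) : ‖emb n (0 : En' n) t‖ = |t| := by
  rw [EuclideanSpace.norm_eq]
  have hsum : ∑ i, ‖emb n (0 : En' n) t i‖ ^ 2 = t ^ 2 := by
    rw [Finset.sum_eq_single (⟨n - 1, Nat.sub_lt hn one_pos⟩ : Fin n)]
    · rw [emb_apply_last hn, Real.norm_eq_abs, sq_abs]
    · intro i _ hne
      have hi : (i : ℕ) < n - 1 := by
        have h1 : (i : ℕ) < n := i.2
        have h2 : (i : ℕ) ≠ n - 1 := fun hh => hne (Fin.ext hh)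
        omega
      simp only [emb, WithLp.ofLp_toLp, dif_pos hi]; simp
    · intro hmem
      exact absurd (Finset.mem_univ _) hmem
  rw [hsum, Real.sqrt_sq_eq_abs]

lemma emb_decomp (y : En' n) (t : ℝ) : emb n y t = emb n y 0 + emb n 0 t := by
  ext i
  rw [PiLp.add_apply]
  by_cases hi : (i : ℕ) < n - 1
  · simp only [emb, WithLp.ofLp_toLp, dif_pos hi]; simp
  · simp only [emb, WithLp.ofLp_toLp, dif_neg hi]; simp

lemma norm_emb_le (hn : 0 < n) (y : En' n) (t : ℝ) : ‖emb n y t‖ ≤ ‖y‖ + |t| := by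
  rw [emb_decomp]
  refine (norm_add_le _ _).trans ?_
  rw [norm_emb_horiz, norm_emb_vert hn]

lemma emb_sub (a b : En' n) (s t : ℝ) :
    emb n a s - emb n b t = emb n (a - b) (s - t) := by
  ext i
  rw [PiLp.sub_apply]
  by_cases hi : (i : ℕ) < n - 1
  · simp [emb, dif_pos hi]
  · simp [emb, dif_neg hi]

lemma proj_sub (u v : En n) : proj n (u - v) = proj n u - proj n v := by
  ext j
  rw [PiLp.sub_apply, proj_apply', proj_apply', proj_apply', PiLp.sub_apply]

lemma norm_proj_le (v : En n) : ‖proj n v‖ ≤ ‖v‖ := by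
  rw [EuclideanSpace.norm_eq, EuclideanSpace.norm_eq]
  apply Real.sqrt_le_sqrt
  have h1 : ∑ j, ‖proj n v j‖ ^ 2 = ∑ i ∈ Finset.univ.image (castF n), ‖v i‖ ^ 2 := by
    rw [Finset.sum_image (fun a _ b _ hab => castF_injective n hab)]
    exact Finset.sum_congr rfl fun j _ => rfl
  rw [h1]
  exact Finset.sum_le_sum_of_subset_of_nonneg (Finset.subset_univ _)
    (fun i _ _ => sq_nonneg _)

lemma lipschitz_proj (n : ℕ) : LipschitzWith 1 (proj n) :=
  LipschitzWith.of_dist_le_mul fun u v => by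
    rw [dist_eq_norm, dist_eq_norm, ← proj_sub]
    simpa using norm_proj_le (u - v)

/-- The graph map `y' ↦ (y', h(y'))`. -/
def gmap (n : ℕ) (h : En' n → ℝ) : En' n → En n := fun y => emb n y (h y)

lemma lipschitz_gmap (hn : 0 < n) {h : En' n → ℝ} {L : ℝ≥0} (hL : LipschitzWith L h) :
    LipschitzWith (1 + L) (gmap n h) :=
  LipschitzWith.of_dist_le_mul fun a b => by
    rw [dist_eq_norm]
    have h1 : gmap n h a - gmap n h b = emb n (a - b) (h a - h b) := emb_sub _ _ _ _
    rw [h1]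
    calc ‖emb n (a - b) (h a - h b)‖ ≤ ‖a - b‖ + |h a - h b| := norm_emb_le hn _ _
      _ ≤ dist a b + (L : ℝ) * dist a b := by
          refine add_le_add (le_of_eq (dist_eq_norm a b).symm) ?_
          simpa [Real.dist_eq] using hL.dist_le_mul a b
      _ = ((1 + L : ℝ≥0) : ℝ) * dist a b := by push_cast; ring

lemma proj_gmap (h : En' n → ℝ) (y : En' n) : proj n (gmap n h y) = y := by
  ext j
  rw [proj_apply']
  exact emb_apply_lt y (h y) j

lemma lastC_emb (hn : 0 < n) (y : En' n) (t : ℝ) : lastC n (emb n y t) = t := by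
  rw [lastC, dif_pos hn]
  exact emb_apply_last hn y t

lemma gmap_mem_bdry (hn : 0 < n) (h : En' n → ℝ) (y : En' n) :
    gmap n h y ∈ bdry n h := by
  show lastC n (gmap n h y) = h (proj n (gmap n h y))
  rw [proj_gmap, gmap, lastC_emb hn]

lemma gmap_proj (hn : 0 < n) {h : En' n → ℝ} {x : En n} (hx : x ∈ bdry n h) :
    gmap n h (proj n x) = x := by
  ext i
  show emb n (proj n x) (h (proj n x)) i = x i
  by_cases hi : (i : ℕ) < n - 1
  · simp only [emb, WithLp.ofLp_toLp, dif_pos hi]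
    exact congrArg x (Fin.ext rfl)
  · simp only [emb, WithLp.ofLp_toLp, dif_neg hi]
    have hx' : lastC n x = h (proj n x) := hx
    rw [← hx', lastC, dif_pos hn]
    refine congrArg x (Fin.ext ?_)
    have h1 : (i : ℕ) < n := i.2
    simp only []
    omega

lemma isClosed_bdry (hn : 0 < n) {h : En' n → ℝ} (hcont : Continuous h) :
    IsClosed (bdry n h) := by
  have hlast : Continuous (lastC n) := by
    have : lastC n = fun x : En n => x ⟨n - 1, Nat.sub_lt hn one_pos⟩ :=
      funext fun x => dif_pos hn
    rw [this]
    exact (EuclideanSpace.proj (⟨n - 1, Nat.sub_lt hn one_pos⟩ : Fin n)).continuous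
  exact isClosed_eq hlast (hcont.comp (lipschitz_proj n).continuous)

lemma cast_dim (hn : 3 ≤ n) : ((Fintype.card (Fin (n - 1)) : ℝ)) = (n : ℝ) - 1 := by
  rw [Fintype.card_fin, Nat.cast_sub (by omega : 1 ≤ n), Nat.cast_one]

lemma dim_nonneg (hn : 3 ≤ n) : (0 : ℝ) ≤ (n : ℝ) - 1 := by
  have h3 : (3 : ℝ) ≤ (n : ℝ) := by exact_mod_cast hn
  linarith

lemma pi_vol_image (hn : 3 ≤ n) {s : Set (En' n)} (hs : MeasurableSet s) :
    volume (⇑(MeasurableEquiv.toLp 2 (Fin (n - 1) → ℝ)).symm '' s) = volume s := by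
  rw [MeasurableEquiv.image_eq_preimage_symm]
  exact ((EuclideanSpace.volume_preserving_symm_measurableEquiv_toLp (Fin (n - 1))).symm).measure_preimage
    hs.nullMeasurableSet

lemma haus_pi_eq_vol (hn : 3 ≤ n) (t : Set (Fin (n - 1) → ℝ)) :
    μH[(n : ℝ) - 1] t = volume t := by
  rw [← cast_dim hn, hausdorffMeasure_pi_real]

lemma vol_le_haus (hn : 3 ≤ n) {s : Set (En' n)} (hs : MeasurableSet s) :
    volume s ≤ μH[(n : ℝ) - 1] s := by
  set φ := (MeasurableEquiv.toLp 2 (Fin (n - 1) → ℝ)).symm with hφdef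
  have hlip : LipschitzWith 1 ⇑φ := by
    rw [hφdef, MeasurableEquiv.coe_toLp_symm]
    exact PiLp.lipschitzWith_ofLp 2 _
  calc volume s = volume (⇑φ '' s) := (pi_vol_image hn hs).symm
    _ = μH[(n : ℝ) - 1] (⇑φ '' s) := (haus_pi_eq_vol hn _).symm
    _ ≤ ((1 : ℝ≥0) : ℝ≥0∞) ^ ((n : ℝ) - 1) * μH[(n : ℝ) - 1] s :=
        hlip.hausdorffMeasure_image_le (dim_nonneg hn) s
    _ = μH[(n : ℝ) - 1] s := by rw [ENNReal.coe_one, ENNReal.one_rpow, one_mul]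

lemma haus_ball_lt_top (hn : 3 ≤ n) (x : En' n) (r : ℝ) :
    μH[(n : ℝ) - 1] (ball x r) < ⊤ := by
  set φ := (MeasurableEquiv.toLp 2 (Fin (n - 1) → ℝ)).symm with hφdef
  have hsymm : LipschitzWith ((Fintype.card (Fin (n - 1)) : ℝ≥0) ^ ((1 : ℝ≥0∞) / 2).toReal)
      ⇑φ.symm := by
    exact PiLp.lipschitzWith_toLp 2 (fun _ : Fin (n - 1) => ℝ)
  have himage : ball x r = ⇑φ.symm '' (⇑φ '' ball x r) := by
    rw [Set.image_image]
    simp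
  calc μH[(n : ℝ) - 1] (ball x r) = μH[(n : ℝ) - 1] (⇑φ.symm '' (⇑φ '' ball x r)) := by
        rw [← himage]
    _ ≤ (((Fintype.card (Fin (n - 1)) : ℝ≥0) ^ ((1 : ℝ≥0∞) / 2).toReal : ℝ≥0) : ℝ≥0∞) ^
          ((n : ℝ) - 1) * μH[(n : ℝ) - 1] (⇑φ '' ball x r) :=
        hsymm.hausdorffMeasure_image_le (dim_nonneg hn) _
    _ < ⊤ := by
        refine ENNReal.mul_lt_top ?_ ?_
        · exact ENNReal.rpow_lt_top_of_nonneg (dim_nonneg hn) ENNReal.coe_ne_top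
        · rw [haus_pi_eq_vol hn, pi_vol_image hn measurableSet_ball]
          exact measure_ball_lt_top

lemma ahlfors_lower (hn : 3 ≤ n) {h : En' n → ℝ} {Kg : ℝ≥0}
    (hKg : LipschitzWith Kg (gmap n h)) (hKg1 : 1 ≤ Kg)
    {x : En n} (hx : x ∈ bdry n h) {r : ℝ} (hr : 0 < r) :
    ENNReal.ofReal ((r / (Kg : ℝ)) ^ (n - 1)) * volume (ball (0 : En' n) 1) ≤
      surf n (bdry n h ∩ ball x r) := by
  have hn0 : 0 < n := by omega
  have hKg0 : (0 : ℝ) < (Kg : ℝ) := lt_of_lt_of_le one_pos (by exact_mod_cast hKg1)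
  set r' : ℝ := r / (Kg : ℝ) with hr'def
  have hr' : 0 < r' := div_pos hr hKg0
  have hincl : gmap n h '' ball (proj n x) r' ⊆ bdry n h ∩ ball x r := by
    rintro _ ⟨y, hy, rfl⟩
    refine ⟨gmap_mem_bdry hn0 h y, mem_ball.2 ?_⟩
    calc dist (gmap n h y) x = dist (gmap n h y) (gmap n h (proj n x)) := by
          rw [gmap_proj hn0 hx]
      _ ≤ (Kg : ℝ) * dist y (proj n x) := hKg.dist_le_mul _ _
      _ < (Kg : ℝ) * r' := (mul_lt_mul_iff_right₀ hKg0).2 (mem_ball.1 hy)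
      _ = r := by rw [hr'def, mul_comm, div_mul_cancel₀ r (ne_of_gt hKg0)]
  have h4 : volume (ball (proj n x) r') =
      ENNReal.ofReal (r' ^ (n - 1)) * volume (ball (0 : En' n) 1) := by
    have hfin := Measure.addHaar_ball_of_pos (volume : Measure (En' n)) (proj n x) hr'
    rwa [finrank_euclideanSpace_fin] at hfin
  have himg : proj n '' (gmap n h '' ball (proj n x) r') = ball (proj n x) r' := by
    rw [Set.image_image]
    simp [proj_gmap]
  calc ENNReal.ofReal (r' ^ (n - 1)) * volume (ball (0 : En' n) 1)
      = volume (ball (proj n x) r') := h4.symm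
    _ ≤ μH[(n : ℝ) - 1] (ball (proj n x) r') := vol_le_haus hn measurableSet_ball
    _ = μH[(n : ℝ) - 1] (proj n '' (gmap n h '' ball (proj n x) r')) := by rw [himg]
    _ ≤ ((1 : ℝ≥0) : ℝ≥0∞) ^ ((n : ℝ) - 1) *
          μH[(n : ℝ) - 1] (gmap n h '' ball (proj n x) r') :=
        (lipschitz_proj n).hausdorffMeasure_image_le (dim_nonneg hn) _
    _ = μH[(n : ℝ) - 1] (gmap n h '' ball (proj n x) r') := by
        rw [ENNReal.coe_one, ENNReal.one_rpow, one_mul]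
    _ ≤ surf n (bdry n h ∩ ball x r) := measure_mono hincl

lemma ahlfors_upper (hn : 3 ≤ n) {h : En' n → ℝ} {Kg : ℝ≥0}
    (hKg : LipschitzWith Kg (gmap n h))
    {x : En n} (hx : x ∈ bdry n h) (r : ℝ) :
    surf n (bdry n h ∩ ball x r) < ⊤ := by
  have hn0 : 0 < n := by omega
  have hincl : bdry n h ∩ ball x r ⊆ gmap n h '' ball (proj n x) r := by
    rintro z ⟨hz, hzball⟩
    refine ⟨proj n z, mem_ball.2 ?_, gmap_proj hn0 hz⟩
    calc dist (proj n z) (proj n x) ≤ 1 * dist z x := (lipschitz_proj n).dist_le_mul z x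
      _ < r := by rw [one_mul]; exact mem_ball.1 hzball
  calc surf n (bdry n h ∩ ball x r) ≤ μH[(n : ℝ) - 1] (gmap n h '' ball (proj n x) r) :=
        measure_mono hincl
    _ ≤ (Kg : ℝ≥0∞) ^ ((n : ℝ) - 1) * μH[(n : ℝ) - 1] (ball (proj n x) r) :=
        hKg.hausdorffMeasure_image_le (dim_nonneg hn) _
    _ < ⊤ := ENNReal.mul_lt_top
        (ENNReal.rpow_lt_top_of_nonneg (dim_nonneg hn) ENNReal.coe_ne_top)
        (haus_ball_lt_top hn _ _)


lemma sobolev_embed (hn : 3 ≤ n) {h : En' n → ℝ} (hcont : Continuous h) {Kg : ℝ≥0}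
    (hKg : LipschitzWith Kg (gmap n h)) (hKg1 : 1 ≤ Kg)
    {f : En n → ℝ} (hf : StronglyMeasurable f)
    (hfin : eLpNorm f (ENNReal.ofReal ((2 * (n : ℝ) - 2) / ((n : ℝ) - 2)))
      ((surf n).restrict (bdry n h)) < ⊤)
    (hgag : gagSqS n (bdry n h) f ≤ 1) :
    eLpNorm f (ENNReal.ofReal ((2 * (n : ℝ) - 2) / ((n : ℝ) - 2)))
      ((surf n).restrict (bdry n h)) ≤
    (((ENNReal.ofReal ((Kg : ℝ) ^ (n - 1)))⁻¹ * volume (ball (0 : En' n) 1)) ^ (-((1:ℝ)/2)) +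
      ((ENNReal.ofReal ((Kg : ℝ) ^ (n - 1)))⁻¹ * volume (ball (0 : En' n) 1)) ^
        (-(1 / ((2 * (n : ℝ) - 2) / ((n : ℝ) - 2))))) ^
      (((2 * (n : ℝ) - 2) / ((n : ℝ) - 2)) * (1 / 2)) := by
  have hn0 : 0 < n := by omega
  have hn3 : (3 : ℝ) ≤ (n : ℝ) := by exact_mod_cast hn
  have hGammaMeas : MeasurableSet (bdry n h) := (isClosed_bdry hn0 hcont).measurableSet
  have hKg0 : (0 : ℝ) < (Kg : ℝ) := lt_of_lt_of_le one_pos (by exact_mod_cast hKg1)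
  set mu := (surf n).restrict (bdry n h) with hmudef
  set q : ℝ := (2 * (n : ℝ) - 2) / ((n : ℝ) - 2) with hqdef
  have hn2 : (0 : ℝ) < (n : ℝ) - 2 := by linarith
  have hn1 : (0 : ℝ) < (n : ℝ) - 1 := by linarith
  have hq2 : 2 ≤ q := by rw [hqdef, le_div_iff₀ hn2]; linarith
  have hq1 : 1 < q := lt_of_lt_of_le one_lt_two hq2
  have hq0 : 0 < q := lt_trans one_pos hq1
  set qE : ℝ≥0∞ := ENNReal.ofReal q with hqEdef
  have hqE0 : qE ≠ 0 := by
    rw [hqEdef, Ne, ENNReal.ofReal_eq_zero, not_le]; exact hq0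
  have hqEt : qE ≠ ⊤ := ENNReal.ofReal_ne_top
  have hqEtoReal : qE.toReal = q := ENNReal.toReal_ofReal hq0.le
  set V := volume (ball (0 : En' n) 1) with hVdef
  have hV0 : V ≠ 0 := (measure_ball_pos volume (0 : En' n) one_pos).ne'
  have hVt : V ≠ ⊤ := measure_ball_lt_top.ne
  set dl := (ENNReal.ofReal ((Kg : ℝ) ^ (n - 1)))⁻¹ * V with hdldef
  have hKpow0 : ENNReal.ofReal ((Kg : ℝ) ^ (n - 1)) ≠ 0 := by
    rw [Ne, ENNReal.ofReal_eq_zero, not_le]; exact pow_pos hKg0 _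
  have hdl0 : dl ≠ 0 := mul_ne_zero (ENNReal.inv_ne_zero.2 ENNReal.ofReal_ne_top) hV0
  have hdlt : dl ≠ ⊤ := ENNReal.mul_ne_top (ENNReal.inv_ne_top.2 hKpow0) hVt
  set c1 := dl ^ (-((1:ℝ)/2)) with hc1def
  set c2 := dl ^ (-(1/q)) with hc2def
  have hc10 : c1 ≠ 0 := (ENNReal.rpow_pos (pos_iff_ne_zero.2 hdl0) hdlt).ne'
  have hc1t : c1 ≠ ⊤ := by
    rw [hc1def, ENNReal.rpow_neg]
    exact ENNReal.inv_ne_top.2 (ENNReal.rpow_pos (pos_iff_ne_zero.2 hdl0) hdlt).ne'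
  have hc20 : c2 ≠ 0 := (ENNReal.rpow_pos (pos_iff_ne_zero.2 hdl0) hdlt).ne'
  have hc2t : c2 ≠ ⊤ := by
    rw [hc2def, ENNReal.rpow_neg]
    exact ENNReal.inv_ne_top.2 (ENNReal.rpow_pos (pos_iff_ne_zero.2 hdl0) hdlt).ne'
  set A : En n → ℝ≥0∞ := fun x => ((‖f x‖₊ : ℝ≥0∞)) with hAdef
  have hAmeas : Measurable A := hf.measurable.enorm
  set D : En n → ℝ≥0∞ :=
    fun x => ∫⁻ y, ENNReal.ofReal (|f x - f y| ^ 2 / ‖x - y‖ ^ n) ∂mu with hDdef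
  set M := eLpNorm f qE mu with hMdef
  have hM_repr : M = (∫⁻ x, A x ^ q ∂mu) ^ (1/q) := by
    rw [hMdef]
    simp only [hAdef]
    rw [eLpNorm_eq_lintegral_rpow_enorm_toReal hqE0 hqEt, hqEtoReal, one_div]
    rfl
  by_cases hM0 : M = 0
  · exact hM0 ▸ zero_le
  have hMt : M ≠ ⊤ := hfin.ne
  have hMpos : 0 < M := pos_iff_ne_zero.2 hM0
  have hcastn : (((n - 1 : ℕ)) : ℝ) = (n : ℝ) - 1 := by
    rw [Nat.cast_sub (by omega : 1 ≤ n), Nat.cast_one]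
  -- Step 1 : pointwise bound with free radius
  have step1 : ∀ x ∈ bdry n h, ∀ r : ℝ, 0 < r →
      A x ≤ c1 * ((ENNReal.ofReal r) ^ ((1:ℝ)/2) * D x ^ ((1:ℝ)/2)) +
        c2 * (M * (ENNReal.ofReal r) ^ (-(((n:ℝ)-2)/2))) := by
    intro x hx r hr
    set rho := ENNReal.ofReal r with hrhodef
    have hrho0 : rho ≠ 0 := by rw [hrhodef, Ne, ENNReal.ofReal_eq_zero, not_le]; exact hr
    have hrhot : rho ≠ ⊤ := ENNReal.ofReal_ne_top
    set m := mu (ball x r) with hmdef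
    have hm_eq : m = surf n (bdry n h ∩ ball x r) := by
      rw [hmdef, hmudef, Measure.restrict_apply measurableSet_ball, Set.inter_comm]
    have hrhopow : ∀ k : ℕ, ENNReal.ofReal (r ^ k) = rho ^ ((k : ℕ) : ℝ) := by
      intro k
      rw [ENNReal.ofReal_pow hr.le, ENNReal.rpow_natCast]
    have hbm : rho ^ ((n:ℝ) - 1) * dl ≤ m := by
      have h1 := ahlfors_lower hn hKg hKg1 hx hr
      rw [← hm_eq] at h1
      refine le_trans (le_of_eq ?_) h1
      rw [div_pow, ENNReal.ofReal_div_of_pos (pow_pos hKg0 _), div_eq_mul_inv,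
        hrhopow (n-1), hcastn, ← hVdef, mul_assoc, ← hdldef]
    set beta := rho ^ ((n:ℝ) - 1) * dl with hbetadef
    have hbeta0 : beta ≠ 0 :=
      mul_ne_zero (ENNReal.rpow_pos (pos_iff_ne_zero.2 hrho0) hrhot).ne' hdl0
    have hm0 : m ≠ 0 := fun hcon =>
      hbeta0 (le_antisymm (le_trans hbm hcon.le) (zero_le))
    have hmt : m ≠ ⊤ := by
      rw [hm_eq]
      exact (ahlfors_upper hn hKg hx r).ne
    set B : En n → ℝ≥0∞ := fun y => ((‖f x - f y‖₊ : ℝ≥0∞)) with hBdef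
    have hBmeas : Measurable B := (measurable_const.sub hf.measurable).enorm
    set s1 := ∫⁻ y in ball x r, B y ∂mu with hs1def
    set s2 := ∫⁻ y in ball x r, A y ∂mu with hs2def
    have htri : A x * m ≤ s1 + s2 := by
      have h1 : ∫⁻ (_ : En n) in ball x r, A x ∂mu = A x * m := by
        rw [setLIntegral_const, ← hmdef]
      have h2 : ∫⁻ (_ : En n) in ball x r, A x ∂mu ≤
          ∫⁻ y in ball x r, (B y + A y) ∂mu := by
        refine lintegral_mono fun y => ?_
        have h3 : ‖f x‖₊ ≤ ‖f x - f y‖₊ + ‖f y‖₊ := by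
          simpa [sub_add_cancel] using nnnorm_add_le (f x - f y) (f y)
        simp only [hAdef, hBdef]
        rw [← ENNReal.coe_add]
        exact ENNReal.coe_le_coe.2 h3
      have h4 : ∫⁻ y in ball x r, (B y + A y) ∂mu = s1 + s2 :=
        lintegral_add_left hBmeas _
      rw [← h1]
      exact h2.trans (le_of_eq h4)
    have hkernel : ∀ᵐ y ∂(mu.restrict (ball x r)),
        B y ^ (2:ℝ) ≤ rho ^ ((n:ℝ)) * ENNReal.ofReal (|f x - f y| ^ 2 / ‖x - y‖ ^ n) := by
      filter_upwards [ae_restrict_mem measurableSet_ball] with y hy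
      have hBsq : B y ^ (2:ℝ) = ENNReal.ofReal (|f x - f y| ^ 2) := by
        simp only [hBdef]
        rw [← enorm_eq_nnnorm, Real.enorm_eq_ofReal_abs, ENNReal.ofReal_rpow_of_nonneg (abs_nonneg _)
          (by norm_num : (0:ℝ) ≤ 2)]
        norm_num
      have hreal : |f x - f y| ^ 2 ≤ r ^ n * (|f x - f y| ^ 2 / ‖x - y‖ ^ n) := by
        rcases eq_or_ne y x with hyx | hyx
        · simp [hyx]
        · have hxy0 : (0:ℝ) < ‖x - y‖ := by
            rw [norm_pos_iff, sub_ne_zero]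
            exact fun hc => hyx hc.symm
          have hle : ‖x - y‖ ≤ r := by
            calc ‖x - y‖ = dist x y := (dist_eq_norm x y).symm
              _ ≤ r := by rw [dist_comm]; exact (mem_ball.1 hy).le
          have hpowpos : (0:ℝ) < ‖x - y‖ ^ n := pow_pos hxy0 n
          calc |f x - f y| ^ 2
              = (|f x - f y| ^ 2 / ‖x - y‖ ^ n) * ‖x - y‖ ^ n :=
                (div_mul_cancel₀ _ hpowpos.ne').symm
            _ ≤ (|f x - f y| ^ 2 / ‖x - y‖ ^ n) * r ^ n :=
                mul_le_mul_of_nonneg_left (pow_le_pow_left₀ hxy0.le hle n)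
                  (div_nonneg (pow_nonneg (abs_nonneg _) 2) hpowpos.le)
            _ = r ^ n * (|f x - f y| ^ 2 / ‖x - y‖ ^ n) := mul_comm _ _
      calc B y ^ (2:ℝ) = ENNReal.ofReal (|f x - f y| ^ 2) := hBsq
        _ ≤ ENNReal.ofReal (r ^ n * (|f x - f y| ^ 2 / ‖x - y‖ ^ n)) :=
            ENNReal.ofReal_le_ofReal hreal
        _ = ENNReal.ofReal (r ^ n) * ENNReal.ofReal (|f x - f y| ^ 2 / ‖x - y‖ ^ n) :=
            ENNReal.ofReal_mul (pow_nonneg hr.le n)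
        _ = rho ^ ((n:ℝ)) * ENNReal.ofReal (|f x - f y| ^ 2 / ‖x - y‖ ^ n) := by
            rw [hrhopow n]
    have hs1sq : ∫⁻ y in ball x r, B y ^ (2:ℝ) ∂mu ≤ rho ^ ((n:ℝ)) * D x := by
      calc ∫⁻ y in ball x r, B y ^ (2:ℝ) ∂mu
          ≤ ∫⁻ y in ball x r,
              rho ^ ((n:ℝ)) * ENNReal.ofReal (|f x - f y| ^ 2 / ‖x - y‖ ^ n) ∂mu :=
            lintegral_mono_ae hkernel
        _ ≤ ∫⁻ y, rho ^ ((n:ℝ)) * ENNReal.ofReal (|f x - f y| ^ 2 / ‖x - y‖ ^ n) ∂mu :=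
            lintegral_mono' Measure.restrict_le_self le_rfl
        _ = rho ^ ((n:ℝ)) * D x := by
            rw [lintegral_const_mul' _ _
              (ENNReal.rpow_ne_top_of_nonneg (Nat.cast_nonneg n) hrhot)]
    have hconj2 : Real.HolderConjugate 2 2 := Real.holderConjugate_iff.mpr ⟨one_lt_two, by norm_num⟩
    have hmeq1 : ∫⁻ (_ : En n), (1:ℝ≥0∞) ∂(mu.restrict (ball x r)) = m := by
      rw [lintegral_one, Measure.restrict_apply_univ, ← hmdef]
    have hhold1 : s1 ≤ (∫⁻ y in ball x r, B y ^ (2:ℝ) ∂mu) ^ ((1:ℝ)/2) * m ^ ((1:ℝ)/2) := by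
      have h1 := ENNReal.lintegral_mul_le_Lp_mul_Lq (mu.restrict (ball x r)) hconj2
        hBmeas.aemeasurable (aemeasurable_const (b := (1:ℝ≥0∞)))
      simp only [Pi.mul_apply, mul_one, ENNReal.one_rpow] at h1
      rw [hmeq1] at h1
      have h2 : (1:ℝ) / 2 = (1:ℝ)/2 := rfl
      exact h1
    have hconjq : Real.HolderConjugate q (q/(q-1)) := Real.HolderConjugate.conjExponent hq1
    have hIball : (∫⁻ y in ball x r, A y ^ q ∂mu) ^ (1/q) ≤ M := by
      rw [hM_repr]
      exact ENNReal.rpow_le_rpow (lintegral_mono' Measure.restrict_le_self le_rfl)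
        (by positivity)
    have hhold2 : s2 ≤ M * m ^ (1/(q/(q-1))) := by
      have h1 := ENNReal.lintegral_mul_le_Lp_mul_Lq (mu.restrict (ball x r)) hconjq
        hAmeas.aemeasurable (aemeasurable_const (b := (1:ℝ≥0∞)))
      simp only [Pi.mul_apply, mul_one, ENNReal.one_rpow] at h1
      rw [hmeq1] at h1
      exact h1.trans (mul_le_mul_left hIball _)
    have hsum : A x ≤ s1 * m⁻¹ + s2 * m⁻¹ := by
      have h1 : A x = (A x * m) * m⁻¹ := by
        rw [mul_assoc, ENNReal.mul_inv_cancel hm0 hmt, mul_one]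
      calc A x = (A x * m) * m⁻¹ := h1
        _ ≤ (s1 + s2) * m⁻¹ := mul_le_mul_left htri _
        _ = s1 * m⁻¹ + s2 * m⁻¹ := add_mul _ _ _
    have hminv : m⁻¹ = m ^ (-(1:ℝ)) := by rw [ENNReal.rpow_neg, ENNReal.rpow_one]
    have hmpow : ∀ e : ℝ, 0 < e → m ^ (-e) ≤ beta ^ (-e) := by
      intro e he
      rw [ENNReal.rpow_neg, ENNReal.rpow_neg]
      exact ENNReal.inv_le_inv.2 (ENNReal.rpow_le_rpow hbm he.le)
    have hb1 : s1 * m⁻¹ ≤ c1 * (rho ^ ((1:ℝ)/2) * D x ^ ((1:ℝ)/2)) := by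
      have h2 : m ^ ((1:ℝ)/2) * m⁻¹ = m ^ (-((1:ℝ)/2)) := by
        rw [hminv, ← ENNReal.rpow_add _ _ hm0 hmt]
        norm_num
      have h3 : beta ^ (-((1:ℝ)/2)) = rho ^ (-(((n:ℝ)-1)/2)) * c1 := by
        rw [hbetadef, ENNReal.mul_rpow_of_ne_zero
          (ENNReal.rpow_pos (pos_iff_ne_zero.2 hrho0) hrhot).ne' hdl0,
          ← ENNReal.rpow_mul, hc1def]
        rw [show ((n:ℝ)-1) * (-((1:ℝ)/2)) = -(((n:ℝ)-1)/2) by ring]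
      have h4 : rho ^ (((n:ℝ)) * ((1:ℝ)/2)) * rho ^ (-(((n:ℝ)-1)/2)) = rho ^ ((1:ℝ)/2) := by
        rw [← ENNReal.rpow_add _ _ hrho0 hrhot]
        rw [show ((n:ℝ)) * ((1:ℝ)/2) + -(((n:ℝ)-1)/2) = (1:ℝ)/2 by ring]
      calc s1 * m⁻¹
          ≤ ((rho ^ ((n:ℝ)) * D x) ^ ((1:ℝ)/2) * m ^ ((1:ℝ)/2)) * m⁻¹ :=
            mul_le_mul_left (hhold1.trans (mul_le_mul_left
              (ENNReal.rpow_le_rpow hs1sq (by norm_num)) _)) _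
        _ = (rho ^ ((n:ℝ)) * D x) ^ ((1:ℝ)/2) * (m ^ ((1:ℝ)/2) * m⁻¹) := by
            rw [mul_assoc]
        _ = (rho ^ ((n:ℝ)) * D x) ^ ((1:ℝ)/2) * m ^ (-((1:ℝ)/2)) := by rw [h2]
        _ ≤ (rho ^ ((n:ℝ)) * D x) ^ ((1:ℝ)/2) * beta ^ (-((1:ℝ)/2)) :=
            mul_le_mul_right (hmpow _ (by norm_num)) _
        _ = (rho ^ (((n:ℝ)) * ((1:ℝ)/2)) * D x ^ ((1:ℝ)/2)) *
              (rho ^ (-(((n:ℝ)-1)/2)) * c1) := by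
            rw [ENNReal.mul_rpow_of_nonneg _ _ (by norm_num : (0:ℝ) ≤ 1/2),
              ← ENNReal.rpow_mul, h3]
        _ = c1 * ((rho ^ (((n:ℝ)) * ((1:ℝ)/2)) * rho ^ (-(((n:ℝ)-1)/2))) * D x ^ ((1:ℝ)/2)) := by
            ring
        _ = c1 * (rho ^ ((1:ℝ)/2) * D x ^ ((1:ℝ)/2)) := by rw [h4]
    have hb2 : s2 * m⁻¹ ≤ c2 * (M * rho ^ (-(((n:ℝ)-2)/2))) := by
      have hexp : 1/(q/(q-1)) = 1 - 1/q := by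
        rw [one_div, inv_div, sub_div, div_self hq0.ne']
      have h2 : m ^ (1/(q/(q-1))) * m⁻¹ = m ^ (-(1/q)) := by
        rw [hexp, hminv, ← ENNReal.rpow_add _ _ hm0 hmt]
        rw [show 1 - 1/q + -(1:ℝ) = -(1/q) by ring]
      have h3 : beta ^ (-(1/q)) = rho ^ (-(((n:ℝ)-2)/2)) * c2 := by
        rw [hbetadef, ENNReal.mul_rpow_of_ne_zero
          (ENNReal.rpow_pos (pos_iff_ne_zero.2 hrho0) hrhot).ne' hdl0,
          ← ENNReal.rpow_mul, hc2def]
        have hexp2 : ((n:ℝ)-1) * (-(1/q)) = -(((n:ℝ)-2)/2) := by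
          rw [hqdef]
          have h2n2 : 2*(n:ℝ)-2 ≠ 0 := by linarith
          field_simp
        rw [hexp2]
      calc s2 * m⁻¹ ≤ (M * m ^ (1/(q/(q-1)))) * m⁻¹ := mul_le_mul_left hhold2 _
        _ = M * (m ^ (1/(q/(q-1))) * m⁻¹) := by rw [mul_assoc]
        _ = M * m ^ (-(1/q)) := by rw [h2]
        _ ≤ M * beta ^ (-(1/q)) := mul_le_mul_right (hmpow _ (by positivity)) _
        _ = M * (rho ^ (-(((n:ℝ)-2)/2)) * c2) := by rw [h3]
        _ = c2 * (M * rho ^ (-(((n:ℝ)-2)/2))) := by ring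
    exact hsum.trans (add_le_add hb1 hb2)
  -- Step 2 : optimized pointwise bound
  have hc12t : c1 + c2 ≠ ⊤ := by
    rw [Ne, ENNReal.add_eq_top]
    push_neg
    exact ⟨hc1t, hc2t⟩
  have hc12_0 : c1 + c2 ≠ 0 := by
    intro hcon
    exact hc10 (by simpa using (add_eq_zero.1 hcon).1)
  have key : ∀ x ∈ bdry n h,
      A x ^ q ≤ ((c1 + c2) ^ q * M ^ (2/((n:ℝ)-2))) * D x := by
    intro x hx
    have hKK0 : (c1 + c2) ^ q * M ^ (2/((n:ℝ)-2)) ≠ 0 :=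
      mul_ne_zero (ENNReal.rpow_pos (pos_iff_ne_zero.2 hc12_0) hc12t).ne'
        (ENNReal.rpow_pos hMpos hMt).ne'
    rcases eq_top_or_lt_top (D x) with hDt | hDlt
    · rw [hDt, ENNReal.mul_top hKK0]
      exact le_top
    have hDne : D x ≠ ⊤ := hDlt.ne
    rcases eq_or_ne (D x) 0 with hD0 | hD0
    · have hA0 : A x = 0 := by
        by_contra hA0
        have hAt : A x ≠ ⊤ := ENNReal.coe_ne_top
        have hs0 : (0:ℝ) < ((n:ℝ)-2)/2 := div_pos hn2 two_pos
        have hK00 : c2 * M ≠ 0 := mul_ne_zero hc20 hM0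
        have hK0t : c2 * M ≠ ⊤ := ENNReal.mul_ne_top hc2t hMt
        have hbase_t : 2 * (c2 * M) / A x ≠ ⊤ :=
          (ENNReal.div_lt_top (ENNReal.mul_ne_top ENNReal.ofNat_ne_top hK0t) hA0).ne
        have htaut : (2 * (c2 * M) / A x) ^ (((n:ℝ)-2)/2)⁻¹ ≠ ⊤ :=
          ENNReal.rpow_ne_top_of_nonneg (inv_nonneg.2 hs0.le) hbase_t
        set r := ((2 * (c2 * M) / A x) ^ (((n:ℝ)-2)/2)⁻¹).toReal + 1 with hrdef
        have hr : 0 < r := by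
          rw [hrdef]
          exact add_pos_of_nonneg_of_pos ENNReal.toReal_nonneg one_pos
        have htaur : (2 * (c2 * M) / A x) ^ (((n:ℝ)-2)/2)⁻¹ ≤ ENNReal.ofReal r := by
          rw [hrdef]
          calc (2 * (c2 * M) / A x) ^ (((n:ℝ)-2)/2)⁻¹
              = ENNReal.ofReal (((2 * (c2 * M) / A x) ^ (((n:ℝ)-2)/2)⁻¹).toReal) :=
                (ENNReal.ofReal_toReal htaut).symm
            _ ≤ _ := ENNReal.ofReal_le_ofReal (le_add_of_nonneg_right zero_le_one)
        have hrs : 2 * (c2 * M) / A x ≤ (ENNReal.ofReal r) ^ (((n:ℝ)-2)/2) := by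
          calc 2 * (c2 * M) / A x
              = ((2 * (c2 * M) / A x) ^ (((n:ℝ)-2)/2)⁻¹) ^ (((n:ℝ)-2)/2) := by
                rw [← ENNReal.rpow_mul, inv_mul_cancel₀ hs0.ne', ENNReal.rpow_one]
            _ ≤ (ENNReal.ofReal r) ^ (((n:ℝ)-2)/2) :=
                ENNReal.rpow_le_rpow htaur hs0.le
        have hstep := step1 x hx r hr
        rw [hD0] at hstep
        rw [ENNReal.zero_rpow_of_pos (by norm_num : (0:ℝ) < 1/2), mul_zero, mul_zero,
          zero_add] at hstep
        have hfin2 : A x ≤ A x / 2 := by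
          calc A x ≤ c2 * (M * (ENNReal.ofReal r) ^ (-(((n:ℝ)-2)/2))) := hstep
            _ = (c2 * M) * ((ENNReal.ofReal r) ^ (((n:ℝ)-2)/2))⁻¹ := by
                rw [ENNReal.rpow_neg]; ring
            _ ≤ (c2 * M) * (2 * (c2 * M) / A x)⁻¹ :=
                mul_le_mul_right (ENNReal.inv_le_inv.2 hrs) _
            _ = (c2 * M) * (A x / (2 * (c2 * M))) := by
                rw [ENNReal.inv_div (Or.inl ENNReal.coe_ne_top) (Or.inl hA0)]
            _ = A x / 2 := by
                rw [div_eq_mul_inv, div_eq_mul_inv,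
                  ENNReal.mul_inv (Or.inl (two_ne_zero)) (Or.inl ENNReal.ofNat_ne_top)]
                calc (c2 * M) * (A x * ((2:ℝ≥0∞)⁻¹ * (c2 * M)⁻¹))
                    = ((c2 * M) * (c2 * M)⁻¹) * (A x * (2:ℝ≥0∞)⁻¹) := by ring
                  _ = A x * (2:ℝ≥0∞)⁻¹ := by
                      rw [ENNReal.mul_inv_cancel hK00 hK0t, one_mul]
        exact absurd hfin2 (not_le.2 (ENNReal.half_lt_self hA0 hAt))
      rw [hA0, ENNReal.zero_rpow_of_pos hq0]
      exact zero_le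
    · -- main case : 0 < D x < ⊤
      have hE0 : M ^ (2:ℝ) * (D x)⁻¹ ≠ 0 :=
        mul_ne_zero (ENNReal.rpow_pos hMpos hMt).ne' (ENNReal.inv_ne_zero.2 hDne)
      have hEt : M ^ (2:ℝ) * (D x)⁻¹ ≠ ⊤ :=
        ENNReal.mul_ne_top (ENNReal.rpow_ne_top_of_nonneg (by norm_num) hMt)
          (ENNReal.inv_ne_top.2 hD0)
      have hEpow : ∀ w : ℝ, (M ^ (2:ℝ) * (D x)⁻¹) ^ w = M ^ (2*w) * (D x) ^ (-w) := by
        intro w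
        rw [ENNReal.mul_rpow_of_ne_zero (ENNReal.rpow_pos hMpos hMt).ne'
          (ENNReal.inv_ne_zero.2 hDne), ← ENNReal.rpow_mul, ENNReal.inv_rpow,
          ← ENNReal.rpow_neg]
      set rho0 := (M ^ (2:ℝ) * (D x)⁻¹) ^ (((n:ℝ)-1)⁻¹) with hrho0def
      have hrho00 : rho0 ≠ 0 := (ENNReal.rpow_pos (pos_iff_ne_zero.2 hE0) hEt).ne'
      have hrho0t : rho0 ≠ ⊤ := ENNReal.rpow_ne_top_of_nonneg (inv_nonneg.2 hn1.le) hEt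
      have hr : 0 < rho0.toReal := ENNReal.toReal_pos hrho00 hrho0t
      have hofr : ENNReal.ofReal rho0.toReal = rho0 := ENNReal.ofReal_toReal hrho0t
      have hstep := step1 x hx rho0.toReal hr
      rw [hofr] at hstep
      have hrho0pow : ∀ u : ℝ,
          rho0 ^ u = M ^ (2*(((n:ℝ)-1)⁻¹*u)) * (D x) ^ (-(((n:ℝ)-1)⁻¹*u)) := by
        intro u
        rw [hrho0def, ← ENNReal.rpow_mul, hEpow]
      have ht1 : c1 * (rho0 ^ ((1:ℝ)/2) * D x ^ ((1:ℝ)/2)) =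
          c1 * (M ^ (((n:ℝ)-1)⁻¹) * D x ^ (((n:ℝ)-2)/(2*((n:ℝ)-1)))) := by
        rw [hrho0pow ((1:ℝ)/2)]
        congr 1
        have e1 : 2*((((n:ℝ)-1)⁻¹)*((1:ℝ)/2)) = ((n:ℝ)-1)⁻¹ := by ring
        have e2 : D x ^ (-((((n:ℝ)-1)⁻¹)*((1:ℝ)/2))) * D x ^ ((1:ℝ)/2) =
            D x ^ (((n:ℝ)-2)/(2*((n:ℝ)-1))) := by
          rw [← ENNReal.rpow_add _ _ hD0 hDne]
          congr 1
          field_simp [hn1.ne']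
          ring
        rw [e1, mul_assoc, e2]
      have ht2 : c2 * (M * rho0 ^ (-(((n:ℝ)-2)/2))) =
          c2 * (M ^ (((n:ℝ)-1)⁻¹) * D x ^ (((n:ℝ)-2)/(2*((n:ℝ)-1)))) := by
        have ea : 2*((((n:ℝ)-1)⁻¹)*(-(((n:ℝ)-2)/2))) = -(((n:ℝ)-2)/((n:ℝ)-1)) := by
          ring
        have eb : -((((n:ℝ)-1)⁻¹)*(-(((n:ℝ)-2)/2))) = ((n:ℝ)-2)/(2*((n:ℝ)-1)) := by
          rw [← div_div]
          ring
        have ec : (1:ℝ) + -(((n:ℝ)-2)/((n:ℝ)-1)) = ((n:ℝ)-1)⁻¹ := by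
          field_simp [hn1.ne']
          ring
        calc c2 * (M * rho0 ^ (-(((n:ℝ)-2)/2)))
            = c2 * (M ^ (1:ℝ) * (M ^ (-(((n:ℝ)-2)/((n:ℝ)-1))) *
                D x ^ (((n:ℝ)-2)/(2*((n:ℝ)-1))))) := by
              rw [hrho0pow (-(((n:ℝ)-2)/2)), ea, eb, ENNReal.rpow_one]
          _ = c2 * ((M ^ (1:ℝ) * M ^ (-(((n:ℝ)-2)/((n:ℝ)-1)))) *
                D x ^ (((n:ℝ)-2)/(2*((n:ℝ)-1)))) := by
              ring
          _ = c2 * (M ^ (((n:ℝ)-1)⁻¹) * D x ^ (((n:ℝ)-2)/(2*((n:ℝ)-1)))) := by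
              rw [← ENNReal.rpow_add _ _ hM0 hMt, ec]
      have hAx : A x ≤ (c1 + c2) * (M ^ (((n:ℝ)-1)⁻¹) * D x ^ (((n:ℝ)-2)/(2*((n:ℝ)-1)))) := by
        calc A x ≤ c1 * (rho0 ^ ((1:ℝ)/2) * D x ^ ((1:ℝ)/2)) +
            c2 * (M * rho0 ^ (-(((n:ℝ)-2)/2))) := hstep
          _ = (c1 + c2) * (M ^ (((n:ℝ)-1)⁻¹) * D x ^ (((n:ℝ)-2)/(2*((n:ℝ)-1)))) := by
            rw [ht1, ht2, ← add_mul]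
      have hq' := ENNReal.rpow_le_rpow hAx hq0.le
      have hexp : (((c1 + c2) * (M ^ (((n:ℝ)-1)⁻¹) * D x ^ (((n:ℝ)-2)/(2*((n:ℝ)-1))))) ^ q)
          = ((c1 + c2) ^ q * M ^ (2/((n:ℝ)-2))) * D x := by
        rw [ENNReal.mul_rpow_of_nonneg _ _ hq0.le, ENNReal.mul_rpow_of_nonneg _ _ hq0.le,
          ← ENNReal.rpow_mul, ← ENNReal.rpow_mul]
        have e5 : (((n:ℝ)-1)⁻¹) * q = 2/((n:ℝ)-2) := by
          rw [hqdef]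
          field_simp [hn1.ne', hn2.ne']
        have e6 : (((n:ℝ)-2)/(2*((n:ℝ)-1))) * q = 1 := by
          rw [hqdef]
          have h2n2 : 2*(n:ℝ)-2 ≠ 0 := by linarith
          field_simp
        rw [e5, e6, ENNReal.rpow_one, mul_assoc]
      rw [hexp] at hq'
      exact hq'
  -- Step 3 : integrate
  have hKKt : (c1 + c2) ^ q * M ^ (2/((n:ℝ)-2)) ≠ ⊤ :=
    ENNReal.mul_ne_top (ENNReal.rpow_ne_top_of_nonneg hq0.le hc12t)
      (ENNReal.rpow_ne_top_of_nonneg (div_nonneg two_pos.le hn2.le) hMt)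
  have hIq : ∫⁻ x, A x ^ q ∂mu ≤ (c1 + c2) ^ q * M ^ (2/((n:ℝ)-2)) := by
    calc ∫⁻ x, A x ^ q ∂mu
        ≤ ∫⁻ x, ((c1 + c2) ^ q * M ^ (2/((n:ℝ)-2))) * D x ∂mu := by
          refine lintegral_mono_ae ?_
          have hae : ∀ᵐ x ∂mu, x ∈ bdry n h := by
            rw [hmudef]
            exact ae_restrict_mem hGammaMeas
          filter_upwards [hae] with x hx using key x hx
      _ = ((c1 + c2) ^ q * M ^ (2/((n:ℝ)-2))) * ∫⁻ x, D x ∂mu :=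
          lintegral_const_mul' _ _ hKKt
      _ = ((c1 + c2) ^ q * M ^ (2/((n:ℝ)-2))) * gagSqS n (bdry n h) f := by
          congr 1
      _ ≤ ((c1 + c2) ^ q * M ^ (2/((n:ℝ)-2))) * 1 := mul_le_mul_right hgag _
      _ = (c1 + c2) ^ q * M ^ (2/((n:ℝ)-2)) := mul_one _
  have hIM : ∫⁻ x, A x ^ q ∂mu = M ^ q := by
    rw [hM_repr, ← ENNReal.rpow_mul, one_div, inv_mul_cancel₀ hq0.ne', ENNReal.rpow_one]
  have hM2 : M ^ (2:ℝ) ≤ (c1 + c2) ^ q := by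
    have h1 : M ^ (2/((n:ℝ)-2)) * M ^ (2:ℝ) ≤ M ^ (2/((n:ℝ)-2)) * (c1 + c2) ^ q := by
      calc M ^ (2/((n:ℝ)-2)) * M ^ (2:ℝ) = M ^ q := by
            rw [← ENNReal.rpow_add _ _ hM0 hMt]
            congr 1
            rw [hqdef]
            field_simp [hn2.ne']
            ring
        _ ≤ (c1 + c2) ^ q * M ^ (2/((n:ℝ)-2)) := hIM ▸ hIq
        _ = M ^ (2/((n:ℝ)-2)) * (c1 + c2) ^ q := mul_comm _ _
    exact (ENNReal.mul_le_mul_iff_right (ENNReal.rpow_pos hMpos hMt).ne'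
      (ENNReal.rpow_ne_top_of_nonneg (div_nonneg two_pos.le hn2.le) hMt)).1 h1
  calc M = (M ^ (2:ℝ)) ^ ((1:ℝ)/2) := by
        rw [← ENNReal.rpow_mul, show (2:ℝ)*((1:ℝ)/2) = 1 by norm_num, ENNReal.rpow_one]
    _ ≤ ((c1 + c2) ^ q) ^ ((1:ℝ)/2) := ENNReal.rpow_le_rpow hM2 (by norm_num)
    _ = (c1 + c2) ^ (q * (1/2)) := (ENNReal.rpow_mul _ _ _).symm

end Aux

/-- Corollary 2 of the paper: `L^{(2n-2)/n}(Γ)` embeds continuously into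
`Ḣ^{-1/2}(Γ)`, with
`‖g‖_{Ḣ^{-1/2}(Γ)} ≤ C(n) C_s(h)^{n/2+1} C_1(h) ‖g‖_{L^{(2n-2)/n}(Γ)}`. -/
theorem Lp_embeds_in_Hmhalf_Gamma (n : ℕ) (hn : 3 ≤ n) :
    ∃ C : ℝ, 0 < C ∧
      ∀ h : En' n → ℝ, ContDiff ℝ 2 h → HasCompactSupport h →
        ∀ Rh : ℝ, IsSuppRadius n h Rh →
        ∀ g : En n → ℝ,
          MemLp g (ENNReal.ofReal ((2 * (n : ℝ) - 2) / (n : ℝ)))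
            ((surf n).restrict (bdry n h)) →
          hmHalfNormS n (bdry n h) g ≤
            ENNReal.ofReal (C * Cs n h ^ ((n : ℝ) / 2 + 1) * C1c n h Rh) *
              eLpNorm g (ENNReal.ofReal ((2 * (n : ℝ) - 2) / (n : ℝ)))
                ((surf n).restrict (bdry n h)) := by
  classical
  have hn0 : 0 < n := by omega
  have hn3 : (3 : ℝ) ≤ (n : ℝ) := by exact_mod_cast hn
  have hn2 : (0 : ℝ) < (n : ℝ) - 2 := by linarith
  have hn1 : (0 : ℝ) < (n : ℝ) - 1 := by linarith
  have hnR : (0 : ℝ) < (n : ℝ) := by linarith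
  set q : ℝ := (2 * (n : ℝ) - 2) / ((n : ℝ) - 2) with hqdef
  have hq2 : 2 ≤ q := by rw [hqdef, le_div_iff₀ hn2]; linarith
  have hq0 : (0:ℝ) < q := by linarith
  set p : ℝ := (2 * (n : ℝ) - 2) / (n : ℝ) with hpdef
  have hp1 : 1 < p := by rw [hpdef, lt_div_iff₀ hnR]; linarith
  have hp0 : (0:ℝ) < p := by linarith
  set V := volume (ball (0 : En' n) 1) with hVdef
  have hV0 : V ≠ 0 := (measure_ball_pos volume (0 : En' n) one_pos).ne'
  have hVt : V ≠ ⊤ := measure_ball_lt_top.ne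
  set Th : ℝ≥0∞ := (2:ℝ≥0∞) ^ (q*(1/2)) * (1 + V⁻¹) ^ (q*(1/4)) with hThdef
  have h1V0 : (1 + V⁻¹) ≠ 0 := by
    intro hcon
    simpa using (add_eq_zero.1 hcon).1
  have h1Vt : (1 + V⁻¹) ≠ ⊤ := by
    rw [Ne, ENNReal.add_eq_top]
    push_neg
    exact ⟨ENNReal.one_ne_top, ENNReal.inv_ne_top.2 hV0⟩
  have hTh0 : Th ≠ 0 := mul_ne_zero
    (ENNReal.rpow_pos (by norm_num) ENNReal.ofNat_ne_top).ne'
    (ENNReal.rpow_pos (pos_iff_ne_zero.2 h1V0) h1Vt).ne'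
  have hTht : Th ≠ ⊤ := ENNReal.mul_ne_top
    (ENNReal.rpow_ne_top_of_nonneg (by positivity) ENNReal.ofNat_ne_top)
    (ENNReal.rpow_ne_top_of_nonneg (by positivity) h1Vt)
  refine ⟨Th.toReal, ENNReal.toReal_pos hTh0 hTht, ?_⟩
  intro h hC2 hsupp Rh hRh g hg
  -- Lipschitz data
  have hcont : Continuous h := hC2.continuous
  have hdiff : Differentiable ℝ h := hC2.differentiable (by norm_num)
  have hsg0 : 0 ≤ supGrad n h := Real.iSup_nonneg fun y => norm_nonneg _
  have hsa0 : 0 ≤ supAbs n h := Real.iSup_nonneg fun y => abs_nonneg _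
  have hgradle : ∀ y, ‖fderiv ℝ h y‖ ≤ supGrad n h := by
    intro y
    obtain ⟨Cb, hCb⟩ := Continuous.bounded_above_of_compact_support
      ((hC2.continuous_fderiv (by norm_num)).norm) ((hsupp.fderiv ℝ).norm)
    exact le_ciSup (f := fun z => ‖fderiv ℝ h z‖)
      ⟨Cb, by rintro _ ⟨z, rfl⟩; simpa using hCb z⟩ y
  have hLh : LipschitzWith (supGrad n h).toNNReal h := by
    refine lipschitzWith_of_nnnorm_fderiv_le hdiff fun y => ?_
    rw [← NNReal.coe_le_coe, coe_nnnorm, Real.coe_toNNReal _ hsg0]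
    exact hgradle y
  set Kg : ℝ≥0 := 1 + (supGrad n h).toNNReal with hKgdef
  have hKg : LipschitzWith Kg (gmap n h) := lipschitz_gmap hn0 hLh
  have hKg1 : (1:ℝ≥0) ≤ Kg := le_add_of_nonneg_right (zero_le)
  have hKgR : ((Kg:ℝ)) = 1 + supGrad n h := by
    rw [hKgdef]
    push_cast [Real.coe_toNNReal _ hsg0]
    ring
  have hKg0 : (0:ℝ) < (Kg:ℝ) := by rw [hKgR]; linarith
  have hCs0 : (0:ℝ) < Cs n h := by
    have : Cs n h = 1 + (supAbs n h + supGrad n h) := rfl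
    rw [this]; linarith
  have hCs1 : (1:ℝ) ≤ Cs n h := by
    have : Cs n h = 1 + (supAbs n h + supGrad n h) := rfl
    rw [this]; linarith
  have hKgCs : (Kg:ℝ) ≤ Cs n h := by
    have : Cs n h = 1 + (supAbs n h + supGrad n h) := rfl
    rw [hKgR, this]; linarith
  have hRh0 : 0 ≤ Rh := hRh.1.1
  have hsh0 : 0 ≤ supHess n h := Real.iSup_nonneg fun y => by positivity
  have hC1c1 : (1:ℝ) ≤ C1c n h Rh := by
    have : C1c n h Rh = 1 + Rh * supHess n h := rfl
    rw [this]
    nlinarith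
  -- measure notation
  set mu := (surf n).restrict (bdry n h) with hmudef
  set qE : ℝ≥0∞ := ENNReal.ofReal q with hqEdef
  set pE : ℝ≥0∞ := ENNReal.ofReal p with hpEdef
  set W := ENNReal.ofReal (Cs n h ^ ((n:ℝ)/2 + 1)) with hWdef
  set dl := (ENNReal.ofReal ((Kg : ℝ) ^ (n - 1)))⁻¹ * V with hdldef
  have hcastn : (((n - 1 : ℕ)) : ℝ) = (n : ℝ) - 1 := by
    rw [Nat.cast_sub (by omega : 1 ≤ n), Nat.cast_one]
  -- bound of the Sobolev constant
  have hSbound : (dl ^ (-((1:ℝ)/2)) + dl ^ (-(1/q))) ^ (q * (1/2)) ≤ Th * W := by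
    set u := dl⁻¹ ⊔ 1 with hudef
    have hu1 : (1:ℝ≥0∞) ≤ u := le_sup_right
    have hG1 : (1:ℝ≥0∞) ≤ ENNReal.ofReal ((Kg:ℝ)) := by
      rw [← ENNReal.ofReal_one]
      exact ENNReal.ofReal_le_ofReal (by exact_mod_cast hKg1)
    have hGpow1 : (1:ℝ≥0∞) ≤ (ENNReal.ofReal ((Kg:ℝ))) ^ ((n:ℝ)-1) := by
      calc (1:ℝ≥0∞) = (1:ℝ≥0∞) ^ ((n:ℝ)-1) := (ENNReal.one_rpow _).symm
        _ ≤ _ := ENNReal.rpow_le_rpow hG1 (dim_nonneg hn)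
    have hdlinv : dl⁻¹ = (ENNReal.ofReal ((Kg:ℝ))) ^ ((n:ℝ)-1) * V⁻¹ := by
      rw [hdldef, ENNReal.mul_inv (Or.inl (ENNReal.inv_ne_zero.2 ENNReal.ofReal_ne_top))
        (Or.inr hV0), inv_inv, ENNReal.ofReal_pow hKg0.le, ← ENNReal.rpow_natCast, hcastn]
    have hu : u ≤ (1 + V⁻¹) * (ENNReal.ofReal ((Kg:ℝ))) ^ ((n:ℝ)-1) := by
      refine sup_le ?_ ?_
      · rw [hdlinv, mul_comm]
        exact mul_le_mul_left le_add_self _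
      · calc (1:ℝ≥0∞) = 1 * 1 := (one_mul _).symm
          _ ≤ (1 + V⁻¹) * (ENNReal.ofReal ((Kg:ℝ))) ^ ((n:ℝ)-1) :=
            mul_le_mul' le_self_add hGpow1
    have hc1u : dl ^ (-((1:ℝ)/2)) ≤ u ^ ((1:ℝ)/2) := by
      rw [ENNReal.rpow_neg, ← ENNReal.inv_rpow]
      exact ENNReal.rpow_le_rpow le_sup_left (by norm_num)
    have hc2u : dl ^ (-(1/q)) ≤ u ^ ((1:ℝ)/2) := by
      rw [ENNReal.rpow_neg, ← ENNReal.inv_rpow]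
      calc (dl⁻¹) ^ (1/q) ≤ u ^ (1/q) :=
            ENNReal.rpow_le_rpow le_sup_left (by positivity)
        _ ≤ u ^ ((1:ℝ)/2) := ENNReal.rpow_le_rpow_of_exponent_le hu1
            (by
              have := one_div_le_one_div_of_le two_pos hq2
              linarith)
    have hsum2 : dl ^ (-((1:ℝ)/2)) + dl ^ (-(1/q)) ≤ 2 * u ^ ((1:ℝ)/2) := by
      rw [two_mul]
      exact add_le_add hc1u hc2u
    have hexple : ((n:ℝ)-1)*(q*(1/4)) ≤ (n:ℝ)/2 + 1 := by
      rw [hqdef, show ((n:ℝ)-1)*((2*(n:ℝ)-2)/((n:ℝ)-2)*(1/4)) =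
        (((n:ℝ)-1)*(2*(n:ℝ)-2)*(1/4))/((n:ℝ)-2) from by ring, div_le_iff₀ hn2]
      nlinarith
    calc (dl ^ (-((1:ℝ)/2)) + dl ^ (-(1/q))) ^ (q * (1/2))
        ≤ (2 * u ^ ((1:ℝ)/2)) ^ (q * (1/2)) := ENNReal.rpow_le_rpow hsum2 (by positivity)
      _ = (2:ℝ≥0∞) ^ (q*(1/2)) * u ^ ((1:ℝ)/2 * (q * (1/2))) := by
          rw [ENNReal.mul_rpow_of_nonneg _ _ (by positivity), ← ENNReal.rpow_mul]
      _ = (2:ℝ≥0∞) ^ (q*(1/2)) * u ^ (q * (1/4)) := by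
          rw [show (1:ℝ)/2 * (q * (1/2)) = q * (1/4) from by ring]
      _ ≤ (2:ℝ≥0∞) ^ (q*(1/2)) *
            ((1 + V⁻¹) * (ENNReal.ofReal ((Kg:ℝ))) ^ ((n:ℝ)-1)) ^ (q * (1/4)) :=
          mul_le_mul_right (ENNReal.rpow_le_rpow hu (by positivity)) _
      _ = Th * ((ENNReal.ofReal ((Kg:ℝ))) ^ (((n:ℝ)-1) * (q * (1/4)))) := by
          rw [ENNReal.mul_rpow_of_nonneg _ _ (by positivity), ← ENNReal.rpow_mul, hThdef]
          ring
      _ ≤ Th * W := by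
          refine mul_le_mul_right ?_ _
          calc (ENNReal.ofReal ((Kg:ℝ))) ^ (((n:ℝ)-1) * (q * (1/4)))
              ≤ (ENNReal.ofReal (Cs n h)) ^ (((n:ℝ)-1) * (q * (1/4))) :=
                ENNReal.rpow_le_rpow (ENNReal.ofReal_le_ofReal hKgCs) (by positivity)
            _ ≤ (ENNReal.ofReal (Cs n h)) ^ ((n:ℝ)/2 + 1) :=
                ENNReal.rpow_le_rpow_of_exponent_le
                  (by rw [← ENNReal.ofReal_one]
                      exact ENNReal.ofReal_le_ofReal hCs1) hexple
            _ = W := by rw [hWdef, ← ENNReal.ofReal_rpow_of_pos hCs0]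
  -- conjugate exponents
  have hpconj : Real.HolderConjugate p q := by
    refine Real.holderConjugate_iff.mpr ⟨hp1, ?_⟩
    rw [hpdef, hqdef, inv_div, inv_div, ← add_div]
    rw [div_eq_one_iff_eq (by linarith : 2*(n:ℝ)-2 ≠ 0)]
    ring
  have hpE0 : pE ≠ 0 := by
    rw [hpEdef, Ne, ENNReal.ofReal_eq_zero, not_le]; exact hp0
  have hpEt : pE ≠ ⊤ := ENNReal.ofReal_ne_top
  have hqE0 : qE ≠ 0 := by
    rw [hqEdef, Ne, ENNReal.ofReal_eq_zero, not_le]; exact hq0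
  have hqEt : qE ≠ ⊤ := ENNReal.ofReal_ne_top
  -- the constant inequality for the right-hand side
  have hconst : Th * W ≤
      ENNReal.ofReal (Th.toReal * Cs n h ^ ((n:ℝ)/2 + 1) * C1c n h Rh) := by
    rw [ENNReal.ofReal_mul (by positivity), ENNReal.ofReal_mul ENNReal.toReal_nonneg]
    have h1 : ENNReal.ofReal Th.toReal = Th := ENNReal.ofReal_toReal hTht
    rw [h1, ← hWdef]
    calc Th * W = Th * W * 1 := (mul_one _).symm
      _ ≤ Th * W * ENNReal.ofReal (C1c n h Rh) := by
          refine mul_le_mul_right ?_ _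
          rw [← ENNReal.ofReal_one]
          exact ENNReal.ofReal_le_ofReal hC1c1
  -- main estimate : unfold the supremum
  rw [hmHalfNormS]
  refine iSup_le fun f => iSup_le fun hfmem => iSup_le fun hf1 => iSup_le fun hint => ?_
  have hfae : AEStronglyMeasurable f mu := hfmem.1.1
  set f' := hfae.mk f with hf'def
  have hsm : StronglyMeasurable f' := hfae.stronglyMeasurable_mk
  have heq : f =ᵐ[mu] f' := hfae.ae_eq_mk
  have hfin' : eLpNorm f' qE mu < ⊤ := by
    rw [← eLpNorm_congr_ae heq]
    exact hfmem.1.2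
  have hgagf : gagSqS n (bdry n h) f ≤ 1 := by
    have h2 := ENNReal.rpow_le_rpow hf1 (by norm_num : (0:ℝ) ≤ 2)
    rwa [ENNReal.one_rpow, hHalfNormS, ← ENNReal.rpow_mul,
      show (1:ℝ)/2 * 2 = 1 from by norm_num, ENNReal.rpow_one] at h2
  have hgag' : gagSqS n (bdry n h) f' ≤ 1 := by
    have hgg : gagSqS n (bdry n h) f' = gagSqS n (bdry n h) f := by
      refine lintegral_congr_ae ?_
      filter_upwards [heq] with x hx
      refine lintegral_congr_ae ?_
      filter_upwards [heq] with y hy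
      rw [← hx, ← hy]
    rw [hgg]
    exact hgagf
  have hSob := sobolev_embed hn hcont hKg hKg1 hsm hfin' hgag'
  have hval : ENNReal.ofReal |∫ y in bdry n h, g y * f y ∂surf n| =
      ENNReal.ofReal |∫ y in bdry n h, g y * f' y ∂surf n| := by
    congr 1
    congr 1
    refine integral_congr_ae ?_
    filter_upwards [heq] with y hy
    rw [hy]
  have hhold : ENNReal.ofReal |∫ y in bdry n h, g y * f' y ∂surf n| ≤
      eLpNorm g pE mu * eLpNorm f' qE mu := by
    rw [← Real.enorm_eq_ofReal_abs]
    calc (‖∫ y in bdry n h, g y * f' y ∂surf n‖₊ : ℝ≥0∞)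
        ≤ ∫⁻ y, (‖g y * f' y‖₊ : ℝ≥0∞) ∂mu := enorm_integral_le_lintegral_enorm _
      _ = ∫⁻ y, ((fun z => ((‖g z‖₊:ℝ≥0∞))) * (fun z => ((‖f' z‖₊:ℝ≥0∞)))) y ∂mu := by
          refine lintegral_congr fun y => ?_
          rw [Pi.mul_apply, nnnorm_mul, ENNReal.coe_mul]
      _ ≤ (∫⁻ y, ((‖g y‖₊:ℝ≥0∞)) ^ p ∂mu) ^ (1/p) *
            (∫⁻ y, ((‖f' y‖₊:ℝ≥0∞)) ^ q ∂mu) ^ (1/q) :=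
          ENNReal.lintegral_mul_le_Lp_mul_Lq mu hpconj hg.1.enorm
            hsm.measurable.enorm.aemeasurable
      _ = eLpNorm g pE mu * eLpNorm f' qE mu := by
          rw [eLpNorm_eq_lintegral_rpow_enorm_toReal hpE0 hpEt,
            eLpNorm_eq_lintegral_rpow_enorm_toReal hqE0 hqEt, hpEdef, hqEdef,
            ENNReal.toReal_ofReal hp0.le, ENNReal.toReal_ofReal hq0.le]
          rfl
  calc ENNReal.ofReal |∫ y in bdry n h, g y * f y ∂surf n|
      = ENNReal.ofReal |∫ y in bdry n h, g y * f' y ∂surf n| := hval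
    _ ≤ eLpNorm g pE mu * eLpNorm f' qE mu := hhold
    _ ≤ eLpNorm g pE mu * (Th * W) :=
        mul_le_mul_right (hSob.trans hSbound) _
    _ = (Th * W) * eLpNorm g pE mu := mul_comm _ _
    _ ≤ ENNReal.ofReal (Th.toReal * Cs n h ^ ((n:ℝ)/2 + 1) * C1c n h Rh) *
          eLpNorm g pE mu := mul_le_mul_left hconst _


end GG
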